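/- arXiv:1208.1803 — 5 statements merged into one kernel-verified Lean document; each statement's English description precedes it below -/
import Mathlib

section
/- For a standard Gaussian vector z in R^n with n ≥ 1, letting ξ = 3/(n+2) * ||z||_2^2 - z_1^2 and y = ξ z_1 z (a vector in R^n), one has E[||y||_2^2] ≤ 8n + 16. -/
/-!
Split `‖z‖² = z_i² + ‖z'‖²`, where `z'` (the other coordinates) is independent of `z_i`.
Expanding binomially, every moment `E[z_i^(2a) ‖z‖^(2b)]` becomes a combination of the
one-dimensional moments `E[x^(2k)] = (2k-1)‼` (Stein's identity `E[x^(k+2)] = (k+1) E[x^k]`,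
i.e. integration by parts against `φ' = -x φ`) and the chi-squared moments `E‖z'‖^(2k)`, which
follow from the same expansion by induction on the dimension. With `c = 3/(n+2)` the second
moment is `c² E[z_1² ‖z‖⁶] - 2c E[z_1⁴ ‖z‖⁴] + E[z_1⁶ ‖z‖²]`, which equals
`(6n² + 30n - 36)/(n + 2)` and is at most `8n + 16`.
-/

open MeasureTheory ProbabilityTheory Real Finset
open scoped NNReal Nat

local notation "𝒩" => Measure.pi fun _ => gaussianReal 0 1

lemma integrable_pow_gaussianReal (μ : ℝ) (v : ℝ≥0) (k : ℕ) :
    Integrable (fun x => x ^ k) (gaussianReal μ v) :=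
  (memLp_id_gaussianReal k).integrable_norm_pow'.mono' (by fun_prop)
    (ae_of_all _ fun x => by simp)

lemma integrable_gaussianReal_iff {μ : ℝ} {v : ℝ≥0} (hv : v ≠ 0) {f : ℝ → ℝ} :
    Integrable f (gaussianReal μ v) ↔ Integrable fun x => gaussianPDFReal μ v x * f x := by
  rw [gaussianReal_of_var_ne_zero _ hv, integrable_withDensity_iff_integrable_smul'
    (measurable_gaussianPDF _ _) (ae_of_all _ fun _ => gaussianPDF_lt_top)]
  simp

lemma hasDerivAt_gaussianPDFReal (μ : ℝ) (v : ℝ≥0) (x : ℝ) :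
    HasDerivAt (gaussianPDFReal μ v) (-((x - μ) / v) * gaussianPDFReal μ v x) x := by
  have hsq : HasDerivAt (fun y => (y - μ) ^ 2) (2 * (x - μ)) x := by
    simpa using ((hasDerivAt_id' x).sub_const μ).fun_pow 2
  have hexp := (hsq.fun_neg.div_const (2 * (v : ℝ))).exp.const_mul (√(2 * π * v))⁻¹
  refine hexp.congr_deriv ?_
  rw [gaussianPDFReal, neg_div _ (2 * (x - μ)), mul_div_mul_left _ _ two_ne_zero]
  ring

lemma integral_pow_add_two_gaussianReal (v : ℝ≥0) (k : ℕ) :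
    ∫ x, x ^ (k + 2) ∂gaussianReal 0 v = (k + 1) * v * ∫ x, x ^ k ∂gaussianReal 0 v := by
  rcases eq_or_ne v 0 with rfl | hv
  · simp
  have hint (j : ℕ) : Integrable fun x => x ^ j * gaussianPDFReal 0 v x := by
    simpa [mul_comm] using (integrable_gaussianReal_iff hv).1 (integrable_pow_gaussianReal 0 v j)
  have hparts := integral_mul_deriv_eq_deriv_mul_of_integrable
    (u := fun x => x ^ (k + 1)) (u' := fun x => (k + 1) * x ^ k)
    (v := gaussianPDFReal 0 v) (v' := fun x => -(x / v) * gaussianPDFReal 0 v x)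
    (fun x _ => by simpa using hasDerivAt_pow (k + 1) x)
    (fun x _ => by simpa using hasDerivAt_gaussianPDFReal 0 v x)
    (((hint (k + 2)).const_mul (-(v : ℝ)⁻¹)).congr (ae_of_all _ fun x => by
      simp only [Pi.mul_apply]; ring))
    (((hint k).const_mul ((k : ℝ) + 1)).congr (ae_of_all _ fun x => by
      simp only [Pi.mul_apply]; ring))
    (hint (k + 1))
  simp only [integral_gaussianReal_eq_integral_smul hv, smul_eq_mul]
  have hlhs : ∫ x, x ^ (k + 1) * (-(x / v) * gaussianPDFReal 0 v x)
      = -(v : ℝ)⁻¹ * ∫ x, gaussianPDFReal 0 v x * x ^ (k + 2) := by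
    rw [← integral_const_mul]; congr 1 with x; ring
  have hrhs : ∫ x, ((k : ℝ) + 1) * x ^ k * gaussianPDFReal 0 v x
      = (k + 1) * ∫ x, gaussianPDFReal 0 v x * x ^ k := by
    rw [← integral_const_mul]; congr 1 with x; ring
  rw [hlhs, hrhs] at hparts
  field_simp at hparts
  linarith

lemma integral_pow_two_mul_gaussianReal (v : ℝ≥0) (k : ℕ) :
    ∫ x, x ^ (2 * k) ∂gaussianReal 0 v = v ^ k * (2 * k - 1)‼ := by
  induction k with
  | zero => simp
  | succ k ih =>
    rw [mul_add_one, integral_pow_add_two_gaussianReal, ih,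
      show 2 * k + 2 - 1 = 2 * k + 1 by omega, Nat.doubleFactorial_add_one]
    push_cast
    ring

section SplitCoordinate

variable {α : Type*} [MeasurableSpace α] (μ : Measure α) [SigmaFinite μ]
  {m : ℕ} (i : Fin (m + 1))

lemma integral_mul_comp_removeNth_pi (f : α → ℝ) (g : (Fin m → α) → ℝ) :
    ∫ z, f (z i) * g (i.removeNth z) ∂Measure.pi (fun _ => μ)
      = (∫ x, f x ∂μ) * ∫ y, g y ∂Measure.pi (fun _ => μ) := by
  rw [← integral_prod_mul, ← (measurePreserving_piFinSuccAbove (fun _ => μ) i).integral_comp']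
  rfl

lemma MeasureTheory.Integrable.mul_comp_removeNth_pi {f : α → ℝ} {g : (Fin m → α) → ℝ}
    (hf : Integrable f μ) (hg : Integrable g (Measure.pi fun _ => μ)) :
    Integrable (fun z => f (z i) * g (i.removeNth z)) (Measure.pi fun _ => μ) :=
  ((measurePreserving_piFinSuccAbove (fun _ => μ) i).integrable_comp_emb
    (MeasurableEquiv.measurableEmbedding _)).2 (hf.mul_prod hg)

end SplitCoordinate

lemma pow_mul_sqNorm_pow_eq_sum {m : ℕ} (i : Fin (m + 1)) (a b : ℕ) (z : Fin (m + 1) → ℝ) :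
    z i ^ (2 * a) * (∑ l, z l ^ 2) ^ b
      = ∑ j ∈ range (b + 1),
          (b.choose j : ℝ) * (z i ^ (2 * (a + j)) * (∑ l, i.removeNth z l ^ 2) ^ (b - j)) := by
  rw [Fin.sum_univ_succAbove _ i, add_pow, mul_sum]
  refine sum_congr rfl fun j _ => ?_
  simp only [Fin.removeNth_apply]
  ring

lemma integrable_sqNorm_pow_gaussian_pi (n b : ℕ) :
    Integrable (fun z : Fin n → ℝ => (∑ l, z l ^ 2) ^ b) 𝒩 := by
  induction n generalizing b with
  | zero => simp
  | succ m ih =>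
    have h := pow_mul_sqNorm_pow_eq_sum (0 : Fin (m + 1)) 0 b
    simp only [mul_zero, zero_add, pow_zero, one_mul] at h
    simp_rw [h]
    exact integrable_finsetSum _ fun j _ => .const_mul
      ((integrable_pow_gaussianReal 0 1 _).mul_comp_removeNth_pi _ 0 (ih _)) _

lemma integrable_pow_mul_sqNorm_pow_gaussian_pi {n : ℕ} (i : Fin n) (a b : ℕ) :
    Integrable (fun z : Fin n → ℝ => z i ^ (2 * a) * (∑ l, z l ^ 2) ^ b) 𝒩 := by
  refine (integrable_sqNorm_pow_gaussian_pi n (a + b)).mono' (by fun_prop)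
    (ae_of_all _ fun z => ?_)
  have hi : z i ^ 2 ≤ ∑ l, z l ^ 2 :=
    single_le_sum (fun l _ => sq_nonneg (z l)) (mem_univ i)
  rw [norm_mul, norm_pow, norm_pow, Real.norm_eq_abs, Real.norm_of_nonneg
    (sum_nonneg fun l _ => sq_nonneg (z l)), pow_mul, sq_abs, pow_add]
  gcongr

lemma integral_pow_mul_sqNorm_pow_gaussian_pi {m : ℕ} (i : Fin (m + 1)) (a b : ℕ) :
    ∫ z, z i ^ (2 * a) * (∑ l, z l ^ 2) ^ b ∂𝒩
      = ∑ j ∈ range (b + 1), (b.choose j : ℝ) * (2 * (a + j) - 1)‼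
          * ∫ y : Fin m → ℝ, (∑ l, y l ^ 2) ^ (b - j) ∂𝒩 := by
  simp_rw [pow_mul_sqNorm_pow_eq_sum i a b]
  rw [integral_finsetSum _ fun j _ => .const_mul ((integrable_pow_gaussianReal 0 1 _)
    |>.mul_comp_removeNth_pi _ i (integrable_sqNorm_pow_gaussian_pi m _)) _]
  refine sum_congr rfl fun j _ => ?_
  rw [integral_const_mul, integral_mul_comp_removeNth_pi _ i (fun x => x ^ (2 * (a + j)))
    (fun y => (∑ l, y l ^ 2) ^ (b - j)), integral_pow_two_mul_gaussianReal]
  simp [mul_assoc]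

section ChiSquared

variable (n : ℕ)

lemma integral_sqNorm_gaussian_pi :
    ∫ z : Fin n → ℝ, ∑ l, z l ^ 2 ∂𝒩 = n := by
  induction n with
  | zero => simp
  | succ m ih =>
    have h := integral_pow_mul_sqNorm_pow_gaussian_pi (0 : Fin (m + 1)) 0 1
    simp [sum_range_succ, ih] at h
    rw [h]; push_cast; ring

lemma integral_sqNorm_sq_gaussian_pi :
    ∫ z : Fin n → ℝ, (∑ l, z l ^ 2) ^ 2 ∂𝒩 = n * (n + 2) := by
  induction n with
  | zero => simp
  | succ m ih =>
    have h := integral_pow_mul_sqNorm_pow_gaussian_pi (0 : Fin (m + 1)) 0 2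
    simp [sum_range_succ, ih, integral_sqNorm_gaussian_pi] at h
    rw [h]; push_cast; ring

lemma integral_sqNorm_cube_gaussian_pi :
    ∫ z : Fin n → ℝ, (∑ l, z l ^ 2) ^ 3 ∂𝒩 = n * (n + 2) * (n + 4) := by
  induction n with
  | zero => simp
  | succ m ih =>
    have h := integral_pow_mul_sqNorm_pow_gaussian_pi (0 : Fin (m + 1)) 0 3
    simp [sum_range_succ, ih, integral_sqNorm_gaussian_pi, integral_sqNorm_sq_gaussian_pi] at h
    rw [h]; push_cast; ring

end ChiSquared

section MixedMoments

variable {n : ℕ} (i : Fin n)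

lemma integral_pow_six_mul_sqNorm_gaussian_pi :
    ∫ z : Fin n → ℝ, z i ^ 6 * ∑ l, z l ^ 2 ∂𝒩 = 15 * n + 90 := by
  obtain ⟨m, rfl⟩ := Nat.exists_eq_add_one_of_ne_zero i.pos.ne'
  have h := integral_pow_mul_sqNorm_pow_gaussian_pi i 3 1
  simp [sum_range_succ, integral_sqNorm_gaussian_pi] at h
  rw [h]; push_cast; ring

lemma integral_pow_four_mul_sqNorm_sq_gaussian_pi :
    ∫ z : Fin n → ℝ, z i ^ 4 * (∑ l, z l ^ 2) ^ 2 ∂𝒩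
      = 3 * n ^ 2 + 30 * n + 72 := by
  obtain ⟨m, rfl⟩ := Nat.exists_eq_add_one_of_ne_zero i.pos.ne'
  have h := integral_pow_mul_sqNorm_pow_gaussian_pi i 2 2
  simp [sum_range_succ, integral_sqNorm_gaussian_pi, integral_sqNorm_sq_gaussian_pi] at h
  rw [h]; push_cast; ring

lemma integral_sq_mul_sqNorm_cube_gaussian_pi :
    ∫ z : Fin n → ℝ, z i ^ 2 * (∑ l, z l ^ 2) ^ 3 ∂𝒩
      = (n + 2) * (n + 4) * (n + 6) := by
  obtain ⟨m, rfl⟩ := Nat.exists_eq_add_one_of_ne_zero i.pos.ne'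
  have h := integral_pow_mul_sqNorm_pow_gaussian_pi i 1 3
  simp [sum_range_succ, integral_sqNorm_gaussian_pi, integral_sqNorm_sq_gaussian_pi,
    integral_sqNorm_cube_gaussian_pi] at h
  rw [h]; push_cast; ring

end MixedMoments

theorem gaussian_y_norm_second_moment (n : ℕ) (hn : 1 ≤ n) :
    (∫ z : Fin n → ℝ,
        (3 / ((n : ℝ) + 2) * (∑ i, (z i) ^ 2) - (z ⟨0, hn⟩) ^ 2) ^ 2
          * (z ⟨0, hn⟩) ^ 2 * (∑ i, (z i) ^ 2)
      ∂(Measure.pi fun _ : Fin n => gaussianReal 0 1)) ≤ 8 * (n : ℝ) + 16 := by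
  set i : Fin n := ⟨0, hn⟩
  set c : ℝ := 3 / ((n : ℝ) + 2) with hc
  have hexpand : ∀ z : Fin n → ℝ,
      (c * (∑ l, z l ^ 2) - z i ^ 2) ^ 2 * z i ^ 2 * (∑ l, z l ^ 2)
        = c ^ 2 * (z i ^ 2 * (∑ l, z l ^ 2) ^ 3) - 2 * c * (z i ^ 4 * (∑ l, z l ^ 2) ^ 2)
          + z i ^ 6 * ∑ l, z l ^ 2 := fun z => by ring
  have h₂₃ : Integrable (fun z : Fin n → ℝ => z i ^ 2 * (∑ l, z l ^ 2) ^ 3) 𝒩 :=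
    integrable_pow_mul_sqNorm_pow_gaussian_pi i 1 3
  have h₄₂ : Integrable (fun z : Fin n → ℝ => z i ^ 4 * (∑ l, z l ^ 2) ^ 2) 𝒩 :=
    integrable_pow_mul_sqNorm_pow_gaussian_pi i 2 2
  have h₆₁ : Integrable (fun z : Fin n → ℝ => z i ^ 6 * ∑ l, z l ^ 2) 𝒩 := by
    simpa using integrable_pow_mul_sqNorm_pow_gaussian_pi i 3 1
  simp_rw [hexpand]
  rw [integral_add (by exact (h₂₃.const_mul _).sub (h₄₂.const_mul _)) h₆₁,
    integral_sub (h₂₃.const_mul _) (h₄₂.const_mul _), integral_const_mul, integral_const_mul,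
    integral_sq_mul_sqNorm_cube_gaussian_pi, integral_pow_four_mul_sqNorm_sq_gaussian_pi,
    integral_pow_six_mul_sqNorm_gaussian_pi, hc, div_pow, ← sub_nonneg]
  field_simp
  nlinarith
end

section
/- Suppose A is injective on T and there exists Y in the range of A^* with Y restricted to T equal to zero and Y restricted to T^⊥ positive definite (on T^⊥). Then X_0 = x_0 x_0^* is the unique positive semidefinite solution of A(X) = A(X_0). -/
open Matrix

/-!
The certificate `Y` is positive semidefinite with kernel `ℝ x₀`, and
`tr (Y X) = ⟨λ, A X⟩ = ⟨λ, A X₀⟩ = x₀ᵀ Y x₀ = 0` for every feasible `X`. Writing a positive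
semidefinite `X` as `∑ vᵢ vᵢᵀ`, this trace is `∑ vᵢᵀ Y vᵢ`, so every `vᵢ` is a multiple of `x₀`
and `X = t x₀ x₀ᵀ`. Then `A ((t - 1) x₀ x₀ᵀ) = 0` with `(t - 1) x₀ x₀ᵀ ∈ T`, and injectivity of
`A` on `T` forces `t x₀ x₀ᵀ = x₀ x₀ᵀ`.
-/

section Certificate

variable {ι : Type*} [Fintype ι] {x₀ : ι → ℝ} {Y : Matrix ι ι ℝ}

lemma exists_dotProduct_eq_zero_and_eq_add_smul (x₀ u : ι → ℝ) :
    ∃ (v : ι → ℝ) (a : ℝ), v ⬝ᵥ x₀ = 0 ∧ u = v + a • x₀ := by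
  by_cases hx₀ : x₀ = 0
  · exact ⟨u, 0, by simp [hx₀], by simp⟩
  have hx₀x₀ : x₀ ⬝ᵥ x₀ ≠ 0 := fun h => hx₀ (dotProduct_self_eq_zero.mp h)
  refine ⟨u - (u ⬝ᵥ x₀ / (x₀ ⬝ᵥ x₀)) • x₀, u ⬝ᵥ x₀ / (x₀ ⬝ᵥ x₀), ?_, by simp⟩
  rw [sub_dotProduct, smul_dotProduct, smul_eq_mul, div_mul_cancel₀ _ hx₀x₀, sub_self]

lemma dotProduct_mulVec_add_smul (hY : Y.IsSymm) (hYx₀ : Y *ᵥ x₀ = 0) (v : ι → ℝ) (a : ℝ) :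
    (v + a • x₀) ⬝ᵥ Y *ᵥ (v + a • x₀) = v ⬝ᵥ Y *ᵥ v := by
  have hx₀Y : x₀ ⬝ᵥ Y *ᵥ v = 0 := by
    rw [dotProduct_mulVec, ← mulVec_transpose, hY.eq, hYx₀, zero_dotProduct]
  simp only [mulVec_add, mulVec_smul, hYx₀, smul_zero, add_zero, add_dotProduct,
    smul_dotProduct, hx₀Y, smul_eq_mul, mul_zero]

variable (hY : Y.IsSymm) (hYx₀ : Y *ᵥ x₀ = 0)
  (hpos : ∀ u : ι → ℝ, u ≠ 0 → u ⬝ᵥ x₀ = 0 → 0 < u ⬝ᵥ Y *ᵥ u)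
include hY hYx₀ hpos

lemma exists_eq_smul_or_dotProduct_mulVec_self_pos (u : ι → ℝ) :
    (∃ c : ℝ, u = c • x₀) ∨ 0 < u ⬝ᵥ Y *ᵥ u := by
  obtain ⟨v, a, hvx₀, rfl⟩ := exists_dotProduct_eq_zero_and_eq_add_smul x₀ u
  rw [dotProduct_mulVec_add_smul hY hYx₀]
  rcases eq_or_ne v 0 with rfl | hv
  · exact Or.inl ⟨a, zero_add _⟩
  · exact Or.inr (hpos v hv hvx₀)

lemma dotProduct_mulVec_self_nonneg (u : ι → ℝ) : 0 ≤ u ⬝ᵥ Y *ᵥ u := by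
  rcases exists_eq_smul_or_dotProduct_mulVec_self_pos hY hYx₀ hpos u with ⟨c, rfl⟩ | h
  · simp [mulVec_smul, hYx₀]
  · exact h.le

lemma exists_eq_smul_of_dotProduct_mulVec_self_eq_zero {u : ι → ℝ}
    (hu : u ⬝ᵥ Y *ᵥ u = 0) : ∃ c : ℝ, u = c • x₀ :=
  (exists_eq_smul_or_dotProduct_mulVec_self_pos hY hYx₀ hpos u).resolve_right hu.not_gt

lemma exists_eq_smul_vecMulVec_of_trace_mul_eq_zero {X : Matrix ι ι ℝ} (hX : X.PosSemidef)
    (hYX : trace (Y * X) = 0) : ∃ t : ℝ, X = t • vecMulVec x₀ x₀ := by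
  obtain ⟨m, v, rfl⟩ := posSemidef_iff_eq_sum_vecMulVec.mp hX
  simp only [star_trivial] at hYX ⊢
  have htrace : trace (Y * ∑ i, vecMulVec (v i) (v i)) = ∑ i, v i ⬝ᵥ Y *ᵥ v i := by
    simp only [Matrix.mul_sum, trace_sum, mul_vecMulVec, trace_vecMulVec, dotProduct_comm]
  have hzero : ∀ i, v i ⬝ᵥ Y *ᵥ v i = 0 := fun i =>
    (Finset.sum_eq_zero_iff_of_nonneg fun i _ =>
      dotProduct_mulVec_self_nonneg hY hYx₀ hpos (v i)).mp (htrace ▸ hYX) i (Finset.mem_univ i)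
  choose c hc using fun i => exists_eq_smul_of_dotProduct_mulVec_self_eq_zero hY hYx₀ hpos (hzero i)
  refine ⟨∑ i, c i ^ 2, ?_⟩
  simp only [hc, smul_vecMulVec, vecMulVec_smul, smul_smul, Finset.sum_smul, sq]

end Certificate

lemma smul_vecMulVec_self_eq_of_map_eq {ι M : Type*} [Fintype ι] [AddCommGroup M] [Module ℝ M]
    {x₀ : ι → ℝ} {A : Matrix ι ι ℝ →ₗ[ℝ] M}
    (hinjT : ∀ y : ι → ℝ,
      A (vecMulVec x₀ y + vecMulVec y x₀) = 0 → vecMulVec x₀ y + vecMulVec y x₀ = 0)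
    {t : ℝ} (h : A (t • vecMulVec x₀ x₀) = A (vecMulVec x₀ x₀)) :
    t • vecMulVec x₀ x₀ = vecMulVec x₀ x₀ := by
  have hT : vecMulVec x₀ (((t - 1) / 2) • x₀) + vecMulVec (((t - 1) / 2) • x₀) x₀
      = (t - 1) • vecMulVec x₀ x₀ := by
    rw [vecMulVec_smul, smul_vecMulVec, ← add_smul, add_halves]
  have hA : A ((t - 1) • vecMulVec x₀ x₀) = 0 := by
    rw [sub_smul, one_smul, map_sub, h, sub_self]
  have h0 := hinjT (((t - 1) / 2) • x₀) (by rwa [hT])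
  rwa [hT, sub_smul, one_smul, sub_eq_zero] at h0

theorem exact_dual_certificate_uniqueness_general (n m : ℕ) (x0 : Fin n → ℝ)
    (A : Matrix (Fin n) (Fin n) ℝ →ₗ[ℝ] (Fin m → ℝ))
    (hinjT : ∀ y : Fin n → ℝ,
      A (vecMulVec x0 y + vecMulVec y x0) = 0 → vecMulVec x0 y + vecMulVec y x0 = 0)
    (Y : Matrix (Fin n) (Fin n) ℝ) (hYsymm : Y.IsSymm)
    (lam : Fin m → ℝ)
    (hYrange : ∀ X : Matrix (Fin n) (Fin n) ℝ,
      Matrix.trace (Yᵀ * X) = ∑ i, lam i * A X i)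
    (hYT : Y.mulVec x0 = 0)
    (hYTperp : ∀ u : Fin n → ℝ, u ≠ 0 → u ⬝ᵥ x0 = 0 → 0 < u ⬝ᵥ Y.mulVec u) :
    ∀ X : Matrix (Fin n) (Fin n) ℝ, X.PosSemidef →
      A X = A (vecMulVec x0 x0) → X = vecMulVec x0 x0 := by
  intro X hX hAX
  have htrace : trace (Y * X) = 0 := by
    calc trace (Y * X) = ∑ i, lam i * A X i := by rw [← hYrange, hYsymm.eq]
      _ = trace (Yᵀ * vecMulVec x0 x0) := by rw [hAX, hYrange]
      _ = 0 := by rw [mul_vecMulVec, trace_vecMulVec, hYsymm.eq, hYT, zero_dotProduct]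
  obtain ⟨t, rfl⟩ := exists_eq_smul_vecMulVec_of_trace_mul_eq_zero hYsymm hYT hYTperp hX htrace
  exact smul_vecMulVec_self_eq_of_map_eq hinjT hAX

/-- If `A` is injective on `T` and there exists `Y` in the range of `A^*`
(i.e. `Y = Σ λ_i`-combination realizing `⟨Y, X⟩ = ⟨λ, A X⟩`) with `Y_T = 0`
(equivalently `Y x₀ = 0` for symmetric `Y`) and `Y_{T^⊥} ≻ 0`
(i.e. `uᵀ Y u > 0` for all nonzero `u ⊥ x₀`), then `X₀ = x₀ x₀ᵀ` is the unique
positive semidefinite solution of `A(X) = A(X₀)`. -/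
theorem exact_dual_certificate_uniqueness (n m : ℕ) (x0 : Fin n → ℝ) (hx0 : x0 ≠ 0)
    (A : Matrix (Fin n) (Fin n) ℝ →ₗ[ℝ] (Fin m → ℝ))
    (hinjT : ∀ y : Fin n → ℝ,
      A (vecMulVec x0 y + vecMulVec y x0) = 0 → vecMulVec x0 y + vecMulVec y x0 = 0)
    (Y : Matrix (Fin n) (Fin n) ℝ) (hYsymm : Y.IsSymm)
    (lam : Fin m → ℝ)
    (hYrange : ∀ X : Matrix (Fin n) (Fin n) ℝ,
      Matrix.trace (Yᵀ * X) = ∑ i, lam i * A X i)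
    (hYT : Y.mulVec x0 = 0)
    (hYTperp : ∀ u : Fin n → ℝ, u ≠ 0 → u ⬝ᵥ x0 = 0 → 0 < u ⬝ᵥ Y.mulVec u) :
    ∀ X : Matrix (Fin n) (Fin n) ℝ, X.PosSemidef →
      A X = A (vecMulVec x0 x0) → X = vecMulVec x0 x0 :=
  exact_dual_certificate_uniqueness_general n m x0 A hinjT Y hYsymm lam hYrange hYT hYTperp
end

section
/- Suppose A: Sym(n) → R^m satisfies m^{-1}||A(X)||_1 ≤ (1+δ)||X||_1 for all X ⪰ 0 and m^{-1}||A(X)||_1 ≥ 0.94(1−δ)||X||_op for all X ∈ T, with δ ≤ 1/9, and there exists Ȳ in the range of A^* with ||Ȳ_T||_1 ≤ 1/2 and Ȳ_{T^⊥} ⪰ I_{T^⊥}. Then X_0 = x_0 x_0^T is the unique solution of X ⪰ 0 and A(X) = A(X_0). -/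
open Matrix

/-- Nuclear norm (sum of singular values) of a real square matrix. -/
noncomputable def nucNorm {n : ℕ} (M : Matrix (Fin n) (Fin n) ℝ) : ℝ :=
  ∑ i, Real.sqrt ((Matrix.isHermitian_conjTranspose_mul_self M).eigenvalues i)

/-- Spectral (operator) norm of a real square matrix. -/
noncomputable def opNorm {n : ℕ} (M : Matrix (Fin n) (Fin n) ℝ) : ℝ :=
  ‖LinearMap.toContinuousLinearMap (Matrix.toEuclideanLin M)‖

/-- Orthogonal projection onto `T^⊥`: `X ↦ (I − x₀x₀ᵀ) X (I − x₀x₀ᵀ)`. -/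
noncomputable def TperpProj {n : ℕ} (x0 : Fin n → ℝ) (X : Matrix (Fin n) (Fin n) ℝ) :
    Matrix (Fin n) (Fin n) ℝ :=
  (1 - vecMulVec x0 x0) * X * (1 - vecMulVec x0 x0)

/-- Orthogonal projection onto `T`. -/
noncomputable def TProj {n : ℕ} (x0 : Fin n → ℝ) (X : Matrix (Fin n) (Fin n) ℝ) :
    Matrix (Fin n) (Fin n) ℝ :=
  X - TperpProj x0 X

/-!
Put `H = X - X₀ = H_T + H_⊥`. Since `X ⪰ 0` and `X₀` is supported on `x₀`, `H_⊥ = X_{T^⊥} ⪰ 0`.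
As `Y` lies in the range of `A^*` and `A(H) = 0`,
`0 = ⟨Y, H⟩ = ⟨Y_T, H_T⟩ + ⟨Y, H_⊥⟩ ≥ -½ ‖H_T‖_op + tr H_⊥`.
On the other hand `A(H_T) = -A(H_⊥)`, so the two isometry bounds give
`0.94 (1 - δ) ‖H_T‖_op ≤ (1 + δ) tr H_⊥ ≤ ½ (1 + δ) ‖H_T‖_op`. For `δ ≤ 1/9` this forces
`H_T = 0`, hence `tr H_⊥ = 0`, hence `H = 0`.
-/

open Polynomial

variable {n : ℕ}

lemma sum_comp_eigenvalues_of_charpoly_eq {A : Matrix (Fin n) (Fin n) ℝ} (hA : A.IsHermitian)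
    {d : Fin n → ℝ} (h : A.charpoly = ∏ i, (X - C (d i))) (f : ℝ → ℝ) :
    ∑ i, f (hA.eigenvalues i) = ∑ i, f (d i) := by
  have hprod : ∀ e : Fin n → ℝ,
      ∏ i, (X - C (e i)) = ((Finset.univ.val.map e).map fun a => X - C a).prod := fun e => by
    rw [Multiset.map_map]; rfl
  have hroots : Finset.univ.val.map hA.eigenvalues = Finset.univ.val.map d := by
    simpa only [RCLike.ofReal_real_eq_id, id, hprod, roots_multiset_prod_X_sub_C]
      using congrArg Polynomial.roots (hA.charpoly_eq.symm.trans h)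
  simpa only [Finset.sum_eq_multiset_sum, Multiset.map_map, Function.comp_def]
    using congrArg (fun s => (s.map f).sum) hroots

lemma nucNorm_eq_sum_abs_eigenvalues {A : Matrix (Fin n) (Fin n) ℝ} (hA : A.IsHermitian) :
    nucNorm A = ∑ i, |hA.eigenvalues i| := by
  have hsq : Aᴴ * A = cfc (· ^ 2 : ℝ → ℝ) A := by
    rw [cfc_pow_id A 2 hA.isSelfAdjoint, hA.eq, sq]
  have hcp := hA.charpoly_cfc_eq (· ^ 2)
  rw [← hsq] at hcp
  simp only [RCLike.ofReal_real_eq_id, id] at hcp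
  rw [nucNorm, sum_comp_eigenvalues_of_charpoly_eq _ hcp Real.sqrt]
  simp [Real.sqrt_sq_eq_abs]

lemma Matrix.PosSemidef.nucNorm_eq_trace {A : Matrix (Fin n) (Fin n) ℝ} (hA : A.PosSemidef) :
    nucNorm A = A.trace := by
  rw [nucNorm_eq_sum_abs_eigenvalues hA.1, hA.1.trace_eq_sum_eigenvalues]
  simp [abs_of_nonneg (hA.eigenvalues_nonneg _)]

lemma opNorm_eq_norm_toEuclideanCLM (M : Matrix (Fin n) (Fin n) ℝ) :
    opNorm M = ‖toEuclideanCLM (𝕜 := ℝ) M‖ := rfl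

lemma opNorm_nonneg (M : Matrix (Fin n) (Fin n) ℝ) : 0 ≤ opNorm M := norm_nonneg _

lemma eq_zero_of_opNorm_eq_zero {M : Matrix (Fin n) (Fin n) ℝ} (h : opNorm M = 0) : M = 0 := by
  rw [opNorm_eq_norm_toEuclideanCLM, norm_eq_zero] at h
  exact (map_eq_zero_iff _ toEuclideanCLM.injective).mp h

lemma abs_dotProduct_mulVec_le (M : Matrix (Fin n) (Fin n) ℝ) (x : EuclideanSpace ℝ (Fin n)) :
    |x ⬝ᵥ M *ᵥ x| ≤ opNorm M * ‖x‖ ^ 2 := by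
  rw [← inner_toEuclideanCLM, opNorm_eq_norm_toEuclideanCLM]
  calc _ ≤ ‖x‖ * ‖toEuclideanCLM (𝕜 := ℝ) M x‖ := abs_real_inner_le_norm _ _
    _ ≤ ‖x‖ * (‖toEuclideanCLM (𝕜 := ℝ) M‖ * ‖x‖) := by
        gcongr; exact ContinuousLinearMap.le_opNorm _ _
    _ = _ := by ring

lemma Matrix.IsHermitian.trace_mul_eq_sum_eigenvalues_mul {C : Matrix (Fin n) (Fin n) ℝ}
    (hC : C.IsHermitian) (D : Matrix (Fin n) (Fin n) ℝ) :
    (D * C).trace =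
      ∑ i, hC.eigenvalues i * (hC.eigenvectorBasis i ⬝ᵥ D *ᵥ hC.eigenvectorBasis i) := by
  set U : Matrix (Fin n) (Fin n) ℝ := (hC.eigenvectorUnitary : Matrix (Fin n) (Fin n) ℝ)
  have hU : U * star U = 1 := mem_unitaryGroup_iff.mp hC.eigenvectorUnitary.2
  have hrow : ∀ i, star U i = hC.eigenvectorBasis i := fun i => by ext j; simp [U]
  calc (D * C).trace = (star U * (D * C) * U).trace := by
        rw [trace_mul_cycle, hU, one_mul]
    _ = _ := by
        refine Finset.sum_congr rfl fun i _ => ?_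
        rw [diag_apply, mul_mul_apply, hrow, eigenvectorUnitary_transpose_apply, ← mulVec_mulVec,
          hC.mulVec_eigenvectorBasis, mulVec_smul, dotProduct_smul, smul_eq_mul]

lemma abs_trace_mul_le_nucNorm_mul_opNorm {C : Matrix (Fin n) (Fin n) ℝ} (hC : C.IsHermitian)
    (D : Matrix (Fin n) (Fin n) ℝ) : |(C * D).trace| ≤ nucNorm C * opNorm D := by
  rw [trace_mul_comm, hC.trace_mul_eq_sum_eigenvalues_mul, nucNorm_eq_sum_abs_eigenvalues hC,
    Finset.sum_mul]
  refine (Finset.abs_sum_le_sum_abs _ _).trans (Finset.sum_le_sum fun i _ => ?_)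
  rw [abs_mul]
  gcongr
  simpa [hC.eigenvectorBasis.orthonormal.1 i] using
    abs_dotProduct_mulVec_le D (hC.eigenvectorBasis i)

lemma isHermitian_sum_smul_vecMulVec {ι : Type*} [Fintype ι] (lam : ι → ℝ) (z : ι → Fin n → ℝ) :
    (∑ i, lam i • vecMulVec (z i) (z i)).IsHermitian := by
  simp [IsSymm, transpose_sum, transpose_vecMulVec]

lemma trace_sum_smul_vecMulVec_mul {ι : Type*} [Fintype ι] (lam : ι → ℝ) (z : ι → Fin n → ℝ)
    (M : Matrix (Fin n) (Fin n) ℝ) :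
    ((∑ i, lam i • vecMulVec (z i) (z i)) * M).trace = ∑ i, lam i * (z i ⬝ᵥ M *ᵥ z i) := by
  simp only [Finset.sum_mul, trace_sum, smul_mul_assoc, trace_smul, smul_eq_mul]
  refine Finset.sum_congr rfl fun i _ => ?_
  rw [trace_mul_comm, mul_vecMulVec, trace_vecMulVec, dotProduct_comm]

section Projections

variable {x0 : Fin n → ℝ}

lemma transpose_one_sub_vecMulVec_self (x0 : Fin n → ℝ) :
    (1 - vecMulVec x0 x0)ᵀ = 1 - vecMulVec x0 x0 := by
  simp [transpose_vecMulVec]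

lemma one_sub_vecMulVec_self_mul_self (hx0 : x0 ⬝ᵥ x0 = 1) :
    (1 - vecMulVec x0 x0) * (1 - vecMulVec x0 x0) = 1 - vecMulVec x0 x0 := by
  rw [sub_mul, mul_sub, mul_sub, vecMulVec_mul_vecMulVec, hx0, one_smul]; simp

lemma dotProduct_one_sub_vecMulVec_self_mulVec (hx0 : x0 ⬝ᵥ x0 = 1) (v : Fin n → ℝ) :
    x0 ⬝ᵥ (1 - vecMulVec x0 x0) *ᵥ v = 0 := by
  rw [dotProduct_mulVec, ← mulVec_transpose, transpose_one_sub_vecMulVec_self, sub_mulVec,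
    vecMulVec_mulVec, hx0]
  simp

lemma TProj_add_TperpProj (A : Matrix (Fin n) (Fin n) ℝ) : TProj x0 A + TperpProj x0 A = A :=
  sub_add_cancel _ _

lemma TperpProj_sub (A B : Matrix (Fin n) (Fin n) ℝ) :
    TperpProj x0 (A - B) = TperpProj x0 A - TperpProj x0 B := by
  simp only [TperpProj]
  generalize 1 - vecMulVec x0 x0 = Q
  rw [Matrix.mul_sub, Matrix.sub_mul]

lemma TperpProj_vecMulVec_self (hx0 : x0 ⬝ᵥ x0 = 1) : TperpProj x0 (vecMulVec x0 x0) = 0 := by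
  rw [TperpProj, sub_mul, one_mul, vecMulVec_mul_vecMulVec, hx0, one_smul, sub_self, zero_mul]

lemma TperpProj_TProj (hx0 : x0 ⬝ᵥ x0 = 1) (A : Matrix (Fin n) (Fin n) ℝ) :
    TperpProj x0 (TProj x0 A) = 0 := by
  have hQ := one_sub_vecMulVec_self_mul_self hx0
  rw [TProj, TperpProj_sub, sub_eq_zero]
  simp only [TperpProj]
  generalize 1 - vecMulVec x0 x0 = Q at hQ
  have hQ' : ∀ M, Q * (Q * M) = Q * M := fun M => by rw [← Matrix.mul_assoc, hQ]
  simp only [Matrix.mul_assoc, hQ, hQ']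

lemma trace_TperpProj_mul (A M : Matrix (Fin n) (Fin n) ℝ) :
    (TperpProj x0 A * M).trace = (A * TperpProj x0 M).trace := by
  simp only [TperpProj, Matrix.mul_assoc]
  rw [trace_mul_comm, Matrix.mul_assoc, Matrix.mul_assoc]

lemma trace_mul_TProj (hx0 : x0 ⬝ᵥ x0 = 1) (A B : Matrix (Fin n) (Fin n) ℝ) :
    (A * TProj x0 B).trace = (TProj x0 A * TProj x0 B).trace := by
  conv_lhs => rw [← TProj_add_TperpProj (x0 := x0) A]
  rw [Matrix.add_mul, trace_add, trace_TperpProj_mul, TperpProj_TProj hx0, Matrix.mul_zero,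
    trace_zero, add_zero]

lemma Matrix.IsHermitian.TProj {A : Matrix (Fin n) (Fin n) ℝ} (hA : A.IsHermitian) :
    (TProj x0 A).IsHermitian := by
  rw [isHermitian_iff_isSymm] at hA ⊢
  rw [IsSymm, _root_.TProj, _root_.TperpProj, transpose_sub, transpose_mul, transpose_mul,
    transpose_one_sub_vecMulVec_self, hA.eq, Matrix.mul_assoc]

lemma Matrix.PosSemidef.TperpProj {A : Matrix (Fin n) (Fin n) ℝ} (hA : A.PosSemidef) :
    (TperpProj x0 A).PosSemidef := by
  have := hA.mul_mul_conjTranspose_same (1 - vecMulVec x0 x0)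
  rwa [conjTranspose_eq_transpose_of_trivial, transpose_one_sub_vecMulVec_self] at this

lemma exists_TProj_eq_vecMulVec_add {H : Matrix (Fin n) (Fin n) ℝ} (hH : H.IsHermitian) :
    ∃ y, TProj x0 H = vecMulVec x0 y + vecMulVec y x0 := by
  rw [isHermitian_iff_isSymm] at hH
  refine ⟨H *ᵥ x0 - (x0 ⬝ᵥ H *ᵥ x0 / 2) • x0, ?_⟩
  have hPH : vecMulVec x0 x0 * H = vecMulVec x0 (H *ᵥ x0) := by
    rw [vecMulVec_mul, ← mulVec_transpose, hH.eq]
  have hPHP : vecMulVec x0 x0 * H * vecMulVec x0 x0 = (x0 ⬝ᵥ H *ᵥ x0) • vecMulVec x0 x0 := by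
    rw [hPH, vecMulVec_mul_vecMulVec, vecMulVec_smul, dotProduct_comm]
  have hexpand : TProj x0 H = vecMulVec x0 x0 * H + H * vecMulVec x0 x0
      - vecMulVec x0 x0 * H * vecMulVec x0 x0 := by
    rw [TProj, TperpProj]; noncomm_ring
  rw [hexpand, hPHP, hPH, mul_vecMulVec, vecMulVec_sub, sub_vecMulVec, vecMulVec_smul,
    smul_vecMulVec]
  module

lemma abs_dotProduct_TProj_mulVec {H : Matrix (Fin n) (Fin n) ℝ} {v : Fin n → ℝ}
    (hv : v ⬝ᵥ H *ᵥ v = 0) : |v ⬝ᵥ TProj x0 H *ᵥ v| = |v ⬝ᵥ TperpProj x0 H *ᵥ v| := by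
  rw [TProj, sub_mulVec, dotProduct_sub, hv, zero_sub, abs_neg]

lemma trace_TperpProj_le_trace_mul (hx0 : x0 ⬝ᵥ x0 = 1) {Y X : Matrix (Fin n) (Fin n) ℝ}
    (hY : ∀ u, u ⬝ᵥ x0 = 0 → u ⬝ᵥ u ≤ u ⬝ᵥ Y *ᵥ u) (hX : X.PosSemidef) :
    (TperpProj x0 X).trace ≤ (Y * TperpProj x0 X).trace := by
  obtain ⟨k, v, rfl⟩ := posSemidef_iff_eq_sum_vecMulVec.mp hX
  have hterm : ∀ w, (1 - vecMulVec x0 x0) * vecMulVec w w * (1 - vecMulVec x0 x0) =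
      vecMulVec ((1 - vecMulVec x0 x0) *ᵥ w) ((1 - vecMulVec x0 x0) *ᵥ w) := fun w => by
    rw [mul_vecMulVec, vecMulVec_mul, ← mulVec_transpose, transpose_one_sub_vecMulVec_self]
  simp only [star_trivial, TperpProj, Finset.mul_sum, Finset.sum_mul]
  simp only [hterm, trace_sum]
  refine Finset.sum_le_sum fun i _ => ?_
  rw [mul_vecMulVec, trace_vecMulVec, trace_vecMulVec, dotProduct_comm (Y *ᵥ _)]
  exact hY _ (by rw [dotProduct_comm]; exact dotProduct_one_sub_vecMulVec_self_mulVec hx0 _)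

lemma trace_TperpProj_le_of_dual_certificate (hx0 : x0 ⬝ᵥ x0 = 1)
    {Y X : Matrix (Fin n) (Fin n) ℝ} (hY : Y.IsHermitian) (hYT : nucNorm (TProj x0 Y) ≤ 1 / 2)
    (hYTperp : ∀ u, u ⬝ᵥ x0 = 0 → u ⬝ᵥ u ≤ u ⬝ᵥ Y *ᵥ u) (hX : X.PosSemidef)
    (hYX : (Y * (X - vecMulVec x0 x0)).trace = 0) :
    (TperpProj x0 X).trace ≤ 1 / 2 * opNorm (TProj x0 (X - vecMulVec x0 x0)) := by
  set H := X - vecMulVec x0 x0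
  have hperp : TperpProj x0 H = TperpProj x0 X := by
    rw [TperpProj_sub, TperpProj_vecMulVec_self hx0, sub_zero]
  have hsplit : (Y * TProj x0 H).trace + (Y * TperpProj x0 H).trace = 0 := by
    rw [← trace_add, ← Matrix.mul_add, TProj_add_TperpProj, hYX]
  have htan : |(Y * TProj x0 H).trace| ≤ 1 / 2 * opNorm (TProj x0 H) := by
    rw [trace_mul_TProj hx0]
    exact (abs_trace_mul_le_nucNorm_mul_opNorm hY.TProj _).trans
      (mul_le_mul_of_nonneg_right hYT (opNorm_nonneg _))
  have hnormal := trace_TperpProj_le_trace_mul hx0 hYTperp hX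
  rw [← hperp] at hnormal ⊢
  linarith [neg_abs_le (Y * TProj x0 H).trace]

end Projections

theorem inexact_dual_certificate_uniqueness_general (n m : ℕ) (z : Fin m → Fin n → ℝ)
    (x0 : Fin n → ℝ) (hx0 : ∑ i, (x0 i) ^ 2 = 1) (δ : ℝ) (hδ : δ ≤ 1 / 9)
    (h1 : ∀ X : Matrix (Fin n) (Fin n) ℝ, X.PosSemidef →
      (1 / (m : ℝ)) * ∑ i, |z i ⬝ᵥ X.mulVec (z i)| ≤ (1 + δ) * nucNorm X)
    (h2 : ∀ y : Fin n → ℝ,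
      0.94 * (1 - δ) * opNorm (vecMulVec x0 y + vecMulVec y x0) ≤
        (1 / (m : ℝ)) * ∑ i, |z i ⬝ᵥ (vecMulVec x0 y + vecMulVec y x0).mulVec (z i)|)
    (lam : Fin m → ℝ)
    (hYT : nucNorm (TProj x0 (∑ i, lam i • vecMulVec (z i) (z i))) ≤ 1 / 2)
    (hYTperp : ∀ u : Fin n → ℝ, u ⬝ᵥ x0 = 0 →
      ∑ j, (u j) ^ 2 ≤ u ⬝ᵥ (∑ i, lam i • vecMulVec (z i) (z i)).mulVec u) :
    ∀ X : Matrix (Fin n) (Fin n) ℝ, X.PosSemidef →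
      (fun i => z i ⬝ᵥ X.mulVec (z i)) = (fun i => z i ⬝ᵥ (vecMulVec x0 x0).mulVec (z i)) →
      X = vecMulVec x0 x0 := by
  intro X hX hAX
  have hunit : x0 ⬝ᵥ x0 = 1 := by simpa [dotProduct, sq] using hx0
  set H := X - vecMulVec x0 x0
  have hAH : ∀ i, z i ⬝ᵥ H *ᵥ z i = 0 := fun i => by
    rw [sub_mulVec, dotProduct_sub, congrFun hAX i, sub_self]
  have hperp : TperpProj x0 H = TperpProj x0 X := by
    rw [TperpProj_sub, TperpProj_vecMulVec_self hunit, sub_zero]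
  have hPSD : (TperpProj x0 H).PosSemidef := hperp ▸ hX.TperpProj
  obtain ⟨y, hy⟩ := exists_TProj_eq_vecMulVec_add (x0 := x0)
    (hX.1.sub (isHermitian_iff_isSymm.mpr (transpose_vecMulVec x0 x0)))
  have hcert := trace_TperpProj_le_of_dual_certificate hunit (isHermitian_sum_smul_vecMulVec lam z)
    hYT (fun u hu => by simpa [dotProduct, sq] using hYTperp u hu) hX
    (by simp [trace_sum_smul_vecMulVec_mul, H, hAH])
  have hup := h1 _ hPSD
  have hlow := h2 y
  rw [hPSD.nucNorm_eq_trace] at hup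
  rw [← hy, Finset.sum_congr rfl fun i _ => abs_dotProduct_TProj_mulVec (hAH i)] at hlow
  rw [← hperp] at hcert
  -- `0.94 (1 - δ) > (1 + δ) / 2` for `δ ≤ 1/9`
  have hs : opNorm (TProj x0 H) = 0 := by
    nlinarith [opNorm_nonneg (TProj x0 H), hPSD.trace_nonneg]
  have ht : (TperpProj x0 H).trace = 0 := by nlinarith [hPSD.trace_nonneg]
  have hH : H = 0 := by
    rw [← TProj_add_TperpProj (x0 := x0) H, eq_zero_of_opNorm_eq_zero hs,
      hPSD.trace_eq_zero_iff.mp ht, add_zero]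
  exact sub_eq_zero.mp hH

/-- Central lemma: `ℓ¹`-isometry bounds plus an inexact dual certificate imply that
`X₀ = x₀x₀ᵀ` is the unique positive semidefinite solution of `A(X) = A(X₀)`. -/
theorem inexact_dual_certificate_uniqueness (n m : ℕ) (z : Fin m → Fin n → ℝ)
    (x0 : Fin n → ℝ) (hx0 : ∑ i, (x0 i) ^ 2 = 1) (δ : ℝ) (hδ0 : 0 ≤ δ) (hδ : δ ≤ 1 / 9)
    (h1 : ∀ X : Matrix (Fin n) (Fin n) ℝ, X.PosSemidef →
      (1 / (m : ℝ)) * ∑ i, |z i ⬝ᵥ X.mulVec (z i)| ≤ (1 + δ) * nucNorm X)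
    (h2 : ∀ y : Fin n → ℝ,
      0.94 * (1 - δ) * opNorm (vecMulVec x0 y + vecMulVec y x0) ≤
        (1 / (m : ℝ)) * ∑ i, |z i ⬝ᵥ (vecMulVec x0 y + vecMulVec y x0).mulVec (z i)|)
    (lam : Fin m → ℝ)
    (hYT : nucNorm (TProj x0 (∑ i, lam i • vecMulVec (z i) (z i))) ≤ 1 / 2)
    (hYTperp : ∀ u : Fin n → ℝ, u ⬝ᵥ x0 = 0 →
      ∑ j, (u j) ^ 2 ≤ u ⬝ᵥ (∑ i, lam i • vecMulVec (z i) (z i)).mulVec u) :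
    ∀ X : Matrix (Fin n) (Fin n) ℝ, X.PosSemidef →
      (fun i => z i ⬝ᵥ X.mulVec (z i)) = (fun i => z i ⬝ᵥ (vecMulVec x0 x0).mulVec (z i)) →
      X = vecMulVec x0 x0 :=
  inexact_dual_certificate_uniqueness_general n m z x0 hx0 δ hδ h1 h2 lam hYT hYTperp
end

section
/- Let X_0 = x_0 x_0^T with ||x_0||_2 = 1 and let X be a positive semidefinite matrix with ||X − X_0||_op ≤ C_0 ε, where ε ≥ 0. If v is a unit-norm eigenvector of X corresponding to its largest eigenvalue, then ||X_0 − v v^T||_op ≤ 2 C_0 ε. -/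
/-
Write `P_x = x xᵀ`, `D = X - P_{x₀}`, `r = C₀ε ≥ ‖D‖` and `c = ⟨x₀, v⟩`. For unit vectors
`‖P_{x₀} - P_v‖² ≤ 1 - c²`, so it suffices to show `1 - c² ≤ 4r²`. The Rayleigh quotient of
`X` is at most its largest eigenvalue, so `μ ≥ ⟨x₀, X x₀⟩ = 1 + ⟨x₀, D x₀⟩ ≥ 1 - r`. On the
other hand `D v = μ v - c x₀`, whence `r² ≥ ‖D v‖² = μ²(1 - c²) + c²(1 - μ)² ≥ μ²(1 - c²)`.
If `r ≥ 1/2` then `1 - c² ≤ 1 ≤ 4r²`; otherwise `μ² ≥ 1/4` and again `1 - c² ≤ 4r²`.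
-/

open Matrix

open InnerProductSpace RCLike
open scoped InnerProductSpace RealInnerProductSpace

theorem LinearMap.IsSymmetric.re_inner_apply_self_le {𝕜 E : Type*} [RCLike 𝕜]
    [NormedAddCommGroup E] [InnerProductSpace 𝕜 E] [FiniteDimensional 𝕜 E] {T : E →ₗ[𝕜] E}
    (hT : T.IsSymmetric) {μ : ℝ} (hμ : ∀ ν : ℝ, Module.End.HasEigenvalue T ν → ν ≤ μ) (x : E) :
    re ⟪T x, x⟫_𝕜 ≤ μ * ‖x‖ ^ 2 := by
  rcases eq_or_ne x 0 with rfl | hx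
  · simp
  have : Nontrivial E := ⟨⟨x, 0, hx⟩⟩
  have hbdd : BddAbove (Set.range fun y : {y : E // y ≠ 0} ↦ re ⟪T y, y⟫_𝕜 / ‖(y : E)‖ ^ 2) :=
    ⟨‖LinearMap.toContinuousLinearMap T‖, Set.forall_mem_range.2 fun y ↦
      (le_abs_self _).trans ((LinearMap.toContinuousLinearMap T).rayleighQuotient_le_norm y)⟩
  have hquot := (le_ciSup hbdd ⟨x, hx⟩).trans (hμ _ hT.hasEigenvalue_iSup_of_finiteDimensional)
  rwa [div_le_iff₀ (by positivity)] at hquot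

section RankOne

variable {E : Type*} [NormedAddCommGroup E] [InnerProductSpace ℝ E]

/- With `c = ⟪u, v⟫`, the vectors `v - c u` and `z - ⟪u, z⟫ u` are orthogonal to `u`, and the
left side equals `(1 - c²)⟪u, z⟫² + ⟪v - c u, z - ⟪u, z⟫ u⟫²`; Cauchy–Schwarz on the last term. -/
theorem norm_rankOne_self_sub_rankOne_self_apply_sq_le {u v : E} (hu : ‖u‖ = 1) (hv : ‖v‖ = 1)
    (z : E) :
    ‖(rankOne ℝ u u - rankOne ℝ v v) z‖ ^ 2 ≤ (1 - ⟪u, v⟫ ^ 2) * ‖z‖ ^ 2 := by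
  have hz : ‖z‖ ^ 2 = ⟪u, z⟫ ^ 2 + ‖z - ⟪u, z⟫ • u‖ ^ 2 := by
    rw [norm_sub_sq_real, norm_smul, inner_smul_right, real_inner_comm, hu, Real.norm_eq_abs]
    ring_nf; rw [sq_abs]; ring
  have hw : ‖v - ⟪u, v⟫ • u‖ ^ 2 = 1 - ⟪u, v⟫ ^ 2 := by
    rw [norm_sub_sq_real, norm_smul, inner_smul_right, real_inner_comm, hu, hv, Real.norm_eq_abs]
    ring_nf; rw [sq_abs]; ring
  have hwz : ⟪v - ⟪u, v⟫ • u, z - ⟪u, z⟫ • u⟫ = ⟪v, z⟫ - ⟪u, z⟫ * ⟪u, v⟫ := by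
    simp only [inner_sub_left, inner_sub_right, inner_smul_left, inner_smul_right,
      real_inner_self_eq_norm_sq, hu, real_inner_comm u v, conj_trivial]
    ring
  have hCS : (⟪v, z⟫ - ⟪u, z⟫ * ⟪u, v⟫) ^ 2 ≤ (1 - ⟪u, v⟫ ^ 2) * ‖z - ⟪u, z⟫ • u‖ ^ 2 := by
    rw [← hwz, ← hw, ← mul_pow, ← sq_abs]
    exact pow_le_pow_left₀ (abs_nonneg _) (abs_real_inner_le_norm _ _) 2
  calc ‖(rankOne ℝ u u - rankOne ℝ v v) z‖ ^ 2
      = (1 - ⟪u, v⟫ ^ 2) * ⟪u, z⟫ ^ 2 + (⟪v, z⟫ - ⟪u, z⟫ * ⟪u, v⟫) ^ 2 := by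
        simp only [_root_.sub_apply, rankOne_apply, norm_sub_sq_real, norm_smul, inner_smul_left,
          inner_smul_right, hu, hv, Real.norm_eq_abs, mul_pow, sq_abs, conj_trivial]
        ring
    _ ≤ (1 - ⟪u, v⟫ ^ 2) * ⟪u, z⟫ ^ 2 + (1 - ⟪u, v⟫ ^ 2) * ‖z - ⟪u, z⟫ • u‖ ^ 2 := by gcongr
    _ = (1 - ⟪u, v⟫ ^ 2) * ‖z‖ ^ 2 := by rw [hz]; ring

theorem norm_rankOne_self_sub_rankOne_self_le {u v : E} (hu : ‖u‖ = 1) (hv : ‖v‖ = 1) :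
    ‖rankOne ℝ u u - rankOne ℝ v v‖ ≤ √(1 - ⟪u, v⟫ ^ 2) := by
  refine ContinuousLinearMap.opNorm_le_bound _ (Real.sqrt_nonneg _) fun z ↦ ?_
  calc ‖(rankOne ℝ u u - rankOne ℝ v v) z‖
      = √(‖(rankOne ℝ u u - rankOne ℝ v v) z‖ ^ 2) := (Real.sqrt_sq (norm_nonneg _)).symm
    _ ≤ √((1 - ⟪u, v⟫ ^ 2) * ‖z‖ ^ 2) :=
        Real.sqrt_le_sqrt (norm_rankOne_self_sub_rankOne_self_apply_sq_le hu hv z)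
    _ = √(1 - ⟪u, v⟫ ^ 2) * ‖z‖ := by
        rw [Real.sqrt_mul' _ (by positivity), Real.sqrt_sq (norm_nonneg z)]

theorem one_sub_inner_sq_le_of_norm_sub_rankOne_le {T : E →L[ℝ] E} {u v : E} {r μ : ℝ}
    (hu : ‖u‖ = 1) (hv : ‖v‖ = 1) (hT : ‖T - rankOne ℝ u u‖ ≤ r) (hTv : T v = μ • v)
    (hμ : ⟪T u, u⟫ ≤ μ) :
    1 - ⟪u, v⟫ ^ 2 ≤ 4 * r ^ 2 := by
  set D := T - rankOne ℝ u u
  have hr : 0 ≤ r := (norm_nonneg _).trans hT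
  have hc : 0 ≤ 1 - ⟪u, v⟫ ^ 2 := by
    have := pow_le_pow_left₀ (abs_nonneg _) (abs_real_inner_le_norm u v) 2
    rw [sq_abs, hu, hv] at this
    linarith
  have hμ_ge : 1 - r ≤ μ := by
    have hDu : |⟪D u, u⟫| ≤ r := by
      simpa [hu] using (abs_real_inner_le_norm _ _).trans
        (mul_le_mul_of_nonneg_right (D.le_of_opNorm_le hT u) (norm_nonneg u))
    have : ⟪D u, u⟫ = ⟪T u, u⟫ - 1 := by simp [D, inner_sub_left, hu]
    linarith [(abs_le.1 hDu).1]
  have hμ_sq : μ ^ 2 * (1 - ⟪u, v⟫ ^ 2) ≤ r ^ 2 := by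
    have hDv : ‖D v‖ ^ 2 = μ ^ 2 * (1 - ⟪u, v⟫ ^ 2) + (⟪u, v⟫ * (1 - μ)) ^ 2 := by
      simp only [D, _root_.sub_apply, hTv, rankOne_apply, norm_sub_sq_real, norm_smul,
        inner_smul_left, inner_smul_right, hu, hv, real_inner_comm u v, Real.norm_eq_abs,
        mul_pow, sq_abs, conj_trivial]
      ring
    have hDv_le : ‖D v‖ ≤ r := by simpa [hv] using D.le_of_opNorm_le hT v
    calc μ ^ 2 * (1 - ⟪u, v⟫ ^ 2) ≤ ‖D v‖ ^ 2 := by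
          rw [hDv]; exact le_add_of_nonneg_right (sq_nonneg _)
      _ ≤ r ^ 2 := by gcongr
  rcases le_or_gt (1 / 2) r with hr_ge | hr_lt
  · nlinarith
  · have hμ_sq_ge : 1 / 4 ≤ μ ^ 2 := by nlinarith
    calc 1 - ⟪u, v⟫ ^ 2 = 4 * (1 / 4 * (1 - ⟪u, v⟫ ^ 2)) := by ring
      _ ≤ 4 * (μ ^ 2 * (1 - ⟪u, v⟫ ^ 2)) := by gcongr
      _ ≤ 4 * r ^ 2 := by gcongr

end RankOne

theorem Matrix.toEuclideanCLM_vecMulVec_self {n : Type*} [Fintype n] [DecidableEq n]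
    (x : n → ℝ) :
    toEuclideanCLM (𝕜 := ℝ) (vecMulVec x x) = rankOne ℝ (WithLp.toLp 2 x) (WithLp.toLp 2 x) := by
  ext1 z
  obtain ⟨z, rfl⟩ := (WithLp.equiv 2 _).symm.surjective z
  ext i
  simp [vecMulVec_mulVec, EuclideanSpace.inner_eq_star_dotProduct, dotProduct_comm]

theorem EuclideanSpace.norm_toLp_eq_one {n : Type*} [Fintype n] {x : n → ℝ}
    (hx : ∑ i, x i ^ 2 = 1) : ‖WithLp.toLp 2 x‖ = 1 :=
  (pow_eq_one_iff_of_nonneg (norm_nonneg _) two_ne_zero).1 <| by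
    simpa [EuclideanSpace.real_norm_sq_eq] using hx

theorem leading_eigenvector_stability_general (n : ℕ) (x0 v : Fin n → ℝ) (C0 ε μ : ℝ)
    (hx0 : ∑ i, (x0 i) ^ 2 = 1) (hv : ∑ i, (v i) ^ 2 = 1)
    (X : Matrix (Fin n) (Fin n) ℝ) (hX : X.PosSemidef)
    (hclose : opNorm (X - vecMulVec x0 x0) ≤ C0 * ε)
    (heig : X.mulVec v = μ • v)
    (hmax : ∀ (ν : ℝ) (w : Fin n → ℝ), w ≠ 0 → X.mulVec w = ν • w → ν ≤ μ) :
    opNorm (vecMulVec x0 x0 - vecMulVec v v) ≤ 2 * C0 * ε := by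
  set u := WithLp.toLp 2 x0
  have hopNorm (M : Matrix (Fin n) (Fin n) ℝ) : opNorm M = ‖toEuclideanCLM (𝕜 := ℝ) M‖ := rfl
  have hu := EuclideanSpace.norm_toLp_eq_one hx0
  have hw := EuclideanSpace.norm_toLp_eq_one hv
  have hsymm : (toEuclideanLin X).IsSymmetric := isSymmetric_toEuclideanLin_iff.2 hX.isHermitian
  have hμ : ∀ ν : ℝ, Module.End.HasEigenvalue (toEuclideanLin X) ν → ν ≤ μ := by
    intro ν hν
    obtain ⟨y, hy⟩ := hν.exists_hasEigenvector
    refine hmax ν y.ofLp (by simpa using hy.2) ?_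
    simpa using congrArg WithLp.ofLp hy.apply_eq_smul
  have hray : ⟪toEuclideanCLM (𝕜 := ℝ) X u, u⟫ ≤ μ := by
    have h := hsymm.re_inner_apply_self_le hμ u
    rw [hu, one_pow, mul_one] at h
    exact h
  have hsin := one_sub_inner_sq_le_of_norm_sub_rankOne_le (r := C0 * ε) hu hw
    (by rwa [hopNorm, map_sub, toEuclideanCLM_vecMulVec_self] at hclose)
    (by simp [heig]) hray
  rw [hopNorm, map_sub, toEuclideanCLM_vecMulVec_self, toEuclideanCLM_vecMulVec_self]
  refine (norm_rankOne_self_sub_rankOne_self_le hu hw).trans (Real.sqrt_le_iff.2 ⟨?_, ?_⟩)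
  · linarith [(norm_nonneg _).trans hclose]
  · linarith [show (2 * C0 * ε) ^ 2 = 4 * (C0 * ε) ^ 2 by ring]

/-- If `X ⪰ 0` with `‖X − x₀x₀ᵀ‖_op ≤ C₀ε` (`‖x₀‖ = 1`) and `v` is a unit-norm
eigenvector of `X` for its largest eigenvalue, then `‖x₀x₀ᵀ − vvᵀ‖_op ≤ 2C₀ε`. -/
theorem leading_eigenvector_stability (n : ℕ) (x0 v : Fin n → ℝ) (C0 ε μ : ℝ)
    (hε : 0 ≤ ε)
    (hx0 : ∑ i, (x0 i) ^ 2 = 1) (hv : ∑ i, (v i) ^ 2 = 1)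
    (X : Matrix (Fin n) (Fin n) ℝ) (hX : X.PosSemidef)
    (hclose : opNorm (X - vecMulVec x0 x0) ≤ C0 * ε)
    (heig : X.mulVec v = μ • v)
    (hmax : ∀ (ν : ℝ) (w : Fin n → ℝ), w ≠ 0 → X.mulVec w = ν • w → ν ≤ μ) :
    opNorm (vecMulVec x0 x0 - vecMulVec v v) ≤ 2 * C0 * ε :=
  leading_eigenvector_stability_general n x0 v C0 ε μ hx0 hv X hX hclose heig hmax
end

section
/- Let z be a standard Gaussian vector in R^n and u a unit vector orthogonal to e_1. For the random variable η = −(z_1^2 − 1)⟨z, u⟩^2 restricted to the event E = {|z_1| ≤ √(2β log n)} ∩ {||z||_2 ≤ √(3n)}, one has for every integer k ≥ 2: E[|η 1_E|^k] ≤ 2(2β log n)^{k−2} · 2^k k!. -/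
/-!
On the event `E` one has `|z₁² - 1| ≤ 2β log n`, so `|η|^k 1_E` is at most
`(2β log n)^(k-2) (z₁² - 1)² ⟨z, u⟩^(2k)`. Since `u ⊥ e₁`, the coordinate `z₁` and `⟨z, u⟩`
are independent standard Gaussians, so the expectation of the right-hand side factors as
`E[(z₁² - 1)²] · E[⟨z, u⟩^(2k)] = 2 · (2k - 1)‼`, and `(2k - 1)‼ ≤ (2k)‼ = 2^k k!`.
The even Gaussian moments come from the Gamma integral `Γ(k + 1/2) = (2k - 1)‼ √π / 2^k`.
-/

open MeasureTheory ProbabilityTheory Real Set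
open scoped NNReal Nat

namespace Nat

theorem doubleFactorial_le_doubleFactorial_succ : ∀ n : ℕ, n‼ ≤ (n + 1)‼
  | 0 => le_rfl
  | 1 => by decide
  | n + 2 => by
    rw [doubleFactorial_add_two, doubleFactorial_add_two (n + 1)]
    exact Nat.mul_le_mul (by omega) (doubleFactorial_le_doubleFactorial_succ n)

theorem doubleFactorial_two_mul_sub_one_le (k : ℕ) : (2 * k - 1)‼ ≤ 2 ^ k * k ! := by
  rcases k with _ | k
  · rfl
  rw [← doubleFactorial_two_mul]
  simpa [show 2 * (k + 1) - 1 + 1 = 2 * (k + 1) by omega] using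
    doubleFactorial_le_doubleFactorial_succ (2 * (k + 1) - 1)

end Nat

namespace ProbabilityTheory

lemma integrable_pow_gaussianReal (m : ℝ) (v : ℝ≥0) (n : ℕ) :
    Integrable (fun x => x ^ n) (gaussianReal m v) :=
  ((memLp_id_gaussianReal' n (by simp)).integrable_norm_pow').mono' (by fun_prop)
    (ae_of_all _ fun x => by simp [norm_pow])

lemma integral_pow_two_mul_gaussianReal (k : ℕ) :
    ∫ x, x ^ (2 * k) ∂gaussianReal 0 1 = (2 * k - 1)‼ := by
  have h_even : ∫ x, x ^ (2 * k) ∂gaussianReal 0 1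
      = (√(2 * π))⁻¹ * (2 * ∫ x in Ioi 0, x ^ (2 * k) * exp (-(1 / 2) * x ^ 2)) := by
    rw [integral_gaussianReal_eq_integral_smul one_ne_zero, ← integral_comp_abs,
      ← integral_const_mul]
    congr 1 with x
    rw [(even_two_mul k).pow_abs, sq_abs, gaussianPDFReal]
    simp only [smul_eq_mul, NNReal.coe_one, mul_one, sub_zero]
    ring_nf
  have h_gamma : ∫ x in Ioi (0 : ℝ), x ^ (2 * k) * exp (-(1 / 2) * x ^ 2)
      = (1 / 2) ^ (-(2 * k + 1 : ℝ) / 2) * (1 / 2) * Gamma (k + 1 / 2) := by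
    have := integral_rpow_mul_exp_neg_mul_rpow (p := 2) (q := 2 * k) (b := 1 / 2) two_pos
      (by linarith [(Nat.cast_nonneg k : (0 : ℝ) ≤ k)]) (by norm_num)
    rw [show (2 * k + 1 : ℝ) / 2 = k + 1 / 2 by ring] at this
    rw [← this]
    congr 1 with x
    norm_cast
  have h_pow : (1 / 2 : ℝ) ^ (-(2 * k + 1 : ℝ) / 2) = 2 ^ k * √2 := by
    rw [show -(2 * k + 1 : ℝ) / 2 = -(k + 1 / 2) by ring, one_div, inv_rpow zero_le_two,
      ← rpow_neg zero_le_two, neg_neg, rpow_add two_pos, rpow_natCast, sqrt_eq_rpow, one_div]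
  rw [h_even, h_gamma, h_pow, Gamma_nat_add_half, sqrt_mul zero_le_two]
  field_simp

lemma integrable_sq_sub_one_sq_gaussianReal :
    Integrable (fun x : ℝ => (x ^ 2 - 1) ^ 2) (gaussianReal 0 1) :=
  (((integrable_pow_gaussianReal 0 1 4).sub ((integrable_pow_gaussianReal 0 1 2).const_mul 2)).add
    (integrable_const 1)).congr
    (ae_of_all _ fun x => by simp only [Pi.add_apply, Pi.sub_apply]; ring)

lemma integral_sq_sub_one_sq_gaussianReal : ∫ x, (x ^ 2 - 1) ^ 2 ∂gaussianReal 0 1 = 2 := by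
  have h_expand :
      (fun x : ℝ => (x ^ 2 - 1) ^ 2) = fun x => x ^ (2 * 2) - 2 * x ^ (2 * 1) + 1 := by
    funext x; ring
  have h4 := integrable_pow_gaussianReal 0 1 (2 * 2)
  have h2 := (integrable_pow_gaussianReal 0 1 (2 * 1)).const_mul 2
  rw [h_expand, integral_add (f := fun x => x ^ (2 * 2) - 2 * x ^ (2 * 1)) (h4.sub h2)
    (integrable_const 1), integral_sub h4 h2, integral_const_mul,
    integral_pow_two_mul_gaussianReal, integral_pow_two_mul_gaussianReal, integral_const]
  norm_num [Nat.doubleFactorial]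

lemma hasLaw_sum_mul_pi_gaussianReal {ι : Type*} [Fintype ι] (u : ι → ℝ) :
    HasLaw (fun z : ι → ℝ => ∑ j, z j * u j) (gaussianReal 0 (∑ j, u j ^ 2).toNNReal)
      (Measure.pi fun _ => gaussianReal 0 1) where
  aemeasurable := Measurable.aemeasurable (by fun_prop)
  map_eq := by
    set L := innerSL ℝ (WithLp.toLp 2 u : EuclideanSpace ℝ ι)
    have hL : (fun z : ι → ℝ => ∑ j, z j * u j) = L ∘ WithLp.toLp 2 := by
      ext z
      simp [L, PiLp.inner_apply, mul_comm]
    rw [hL, ← Measure.map_map (by fun_prop) (by fun_prop), map_pi_eq_stdGaussian,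
      IsGaussian.map_eq_gaussianReal, integral_strongDual_stdGaussian, variance_dual_stdGaussian,
      innerSL_apply_norm, EuclideanSpace.real_norm_sq_eq]

lemma indepFun_eval_sum_mul_pi {ι : Type*} [Fintype ι] [DecidableEq ι] (μ : ι → Measure ℝ)
    [∀ i, IsProbabilityMeasure (μ i)] {u : ι → ℝ} {i : ι} (hu : u i = 0) :
    IndepFun (fun z : ι → ℝ => z i) (fun z => ∑ j, z j * u j) (Measure.pi μ) := by
  have h := (iIndepFun_pi (μ := μ) (X := fun _ => id) fun _ => aemeasurable_id).indepFun_finset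
    {i} (Finset.univ.erase i) (by simp) fun _ => measurable_pi_apply _
  have h_sum : (fun z : ι → ℝ => ∑ j, z j * u j)
      = (fun y : Finset.univ.erase i → ℝ => ∑ j, y j * u j) ∘ fun z j => z j := by
    funext z
    rw [Function.comp_apply, Finset.sum_coe_sort (Finset.univ.erase i) (fun j => z j * u j),
      Finset.sum_erase _ (by simp [hu])]
  rw [h_sum]
  exact h.comp (measurable_pi_apply ⟨i, Finset.mem_singleton_self i⟩)
    (Finset.measurable_sum _ fun j _ => (measurable_pi_apply j).mul_const _)

lemma IndepFun.integral_sq_sub_one_sq_mul_pow {Ω : Type*} [MeasurableSpace Ω] {P : Measure Ω}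
    {X Y : Ω → ℝ} (hXY : IndepFun X Y P) (hX : HasLaw X (gaussianReal 0 1) P)
    (hY : HasLaw Y (gaussianReal 0 1) P) (k : ℕ) :
    Integrable (fun ω => (X ω ^ 2 - 1) ^ 2 * Y ω ^ (2 * k)) P ∧
      ∫ ω, (X ω ^ 2 - 1) ^ 2 * Y ω ^ (2 * k) ∂P = (2 : ℝ) * (2 * k - 1)‼ := by
  have h := hXY.comp (show Measurable fun x : ℝ => (x ^ 2 - 1) ^ 2 by fun_prop)
    (show Measurable fun y : ℝ => y ^ (2 * k) by fun_prop)
  have hfX : Integrable (fun ω => (X ω ^ 2 - 1) ^ 2) P :=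
    (hX.map_eq ▸ integrable_sq_sub_one_sq_gaussianReal).comp_aemeasurable hX.aemeasurable
  have hgY : Integrable (fun ω => Y ω ^ (2 * k)) P :=
    (hY.map_eq ▸ integrable_pow_gaussianReal 0 1 (2 * k)).comp_aemeasurable hY.aemeasurable
  refine ⟨h.integrable_mul hfX hgY, ?_⟩
  rw [← integral_pow_two_mul_gaussianReal, ← integral_sq_sub_one_sq_gaussianReal,
    ← hX.integral_comp (by fun_prop), ← hY.integral_comp (by fun_prop)]
  exact h.integral_fun_mul_eq_mul_integral hfX.aestronglyMeasurable hgY.aestronglyMeasurable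

end ProbabilityTheory

lemma abs_sq_sub_one_le {x L : ℝ} (hL : 1 ≤ L) (hx : |x| ≤ √L) : |x ^ 2 - 1| ≤ L := by
  have hx2 : x ^ 2 ≤ L := by
    simpa [sq_abs, sq_sqrt (zero_le_one.trans hL)] using pow_le_pow_left₀ (abs_nonneg x) hx 2
  rw [abs_le]
  constructor <;> nlinarith [sq_nonneg x]

lemma abs_mul_sq_pow_le {a b L : ℝ} {k : ℕ} (hk : 2 ≤ k) (ha : |a| ≤ L) :
    |a * b ^ 2| ^ k ≤ L ^ (k - 2) * (a ^ 2 * b ^ (2 * k)) := by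
  obtain ⟨m, rfl⟩ : ∃ m, k = m + 2 := ⟨k - 2, by omega⟩
  calc |a * b ^ 2| ^ (m + 2) = |a| ^ m * (a ^ 2 * b ^ (2 * (m + 2))) := by
        rw [abs_mul, abs_of_nonneg (sq_nonneg b), mul_pow, pow_add, sq_abs, ← pow_mul]; ring
    _ ≤ L ^ (m + 2 - 2) * (a ^ 2 * b ^ (2 * (m + 2))) := by
        rw [Nat.add_sub_cancel]
        have := mul_nonneg (sq_nonneg a) ((even_two_mul (m + 2)).pow_nonneg b)
        gcongr

/-- Truncated moment bound: for `η = −(z₁² − 1)⟨z, u⟩²` and the event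
`E = {|z₁| ≤ √(2β log n)} ∩ {‖z‖₂ ≤ √(3n)}`, for every `k ≥ 2`,
`E[|η 1_E|^k] ≤ 2(2β log n)^{k−2} · 2^k · k!`. -/
theorem truncated_eta_moment_bound (n : ℕ) (hn : 0 < n) (β : ℝ)
    (hβ : 1 ≤ 2 * β * Real.log n)
    (u : Fin n → ℝ) (hu : ∑ i, (u i) ^ 2 = 1) (hu1 : u ⟨0, hn⟩ = 0)
    (k : ℕ) (hk : 2 ≤ k) :
    ∫ z : Fin n → ℝ,
        |(-((z ⟨0, hn⟩) ^ 2 - 1)) * (∑ j, z j * u j) ^ 2| ^ k *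
          Set.indicator {z : Fin n → ℝ |
              |z ⟨0, hn⟩| ≤ Real.sqrt (2 * β * Real.log n) ∧
              (∑ j, (z j) ^ 2) ≤ 3 * n} (fun _ => (1 : ℝ)) z
      ∂(Measure.pi fun _ : Fin n => gaussianReal 0 1)
      ≤ 2 * (2 * β * Real.log n) ^ (k - 2) * 2 ^ k * (Nat.factorial k) := by
  set L := 2 * β * Real.log n
  have hL : 0 ≤ L := zero_le_one.trans hβ
  have hX := (measurePreserving_eval (fun _ : Fin n => gaussianReal 0 1) ⟨0, hn⟩).hasLaw
  have hY : HasLaw (fun z : Fin n → ℝ => ∑ j, z j * u j) (gaussianReal 0 1)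
      (Measure.pi fun _ => gaussianReal 0 1) := by
    simpa [hu] using hasLaw_sum_mul_pi_gaussianReal u
  obtain ⟨h_int, h_eq⟩ :=
    (indepFun_eval_sum_mul_pi _ hu1).integral_sq_sub_one_sq_mul_pow hX hY k
  calc _ ≤ ∫ z : Fin n → ℝ,
          L ^ (k - 2) * ((z ⟨0, hn⟩ ^ 2 - 1) ^ 2 * (∑ j, z j * u j) ^ (2 * k))
          ∂(Measure.pi fun _ : Fin n => gaussianReal 0 1) := by
        refine integral_mono_of_nonneg
          (ae_of_all _ fun z => mul_nonneg (by positivity) (indicator_nonneg (by simp) z))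
          (h_int.const_mul _) (ae_of_all _ fun z => ?_)
        simp only [indicator_apply]
        split_ifs with hz
        · simpa only [neg_sq, mul_one] using abs_mul_sq_pow_le (b := ∑ j, z j * u j) hk
            ((abs_neg _).trans_le (abs_sq_sub_one_le hβ hz.1))
        · rw [mul_zero]
          exact mul_nonneg (pow_nonneg hL _)
            (mul_nonneg (sq_nonneg _) ((even_two_mul k).pow_nonneg _))
    _ = L ^ (k - 2) * (2 * (2 * k - 1)‼) := by rw [integral_const_mul, h_eq]
    _ ≤ L ^ (k - 2) * (2 * (2 ^ k * k !)) := by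
        gcongr
        exact_mod_cast Nat.doubleFactorial_two_mul_sub_one_le k
    _ = 2 * L ^ (k - 2) * 2 ^ k * k ! := by ring
end
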